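/- Let W ∈ ℝ^{m×m} be a symmetric matrix satisfying W·1 = 1, let P := (1/m)·1·1ᵀ, suppose λ := ‖W − P‖ (ℓ2 operator norm) satisfies λ < 1, and let Q ≥ 1 be an integer. Let (Zᵗ)_{t≥0} be matrices in ℝ^{m×d}, define X⁰ = 0 and Xᵗ⁺¹ = W^Q Zᵗ, and suppose that ‖Xʲ − Zʲ‖_F² ≤ m B² for every j ≥ 0, where ‖·‖_F is the Frobenius norm and B ≥ 0. Then for every t ≥ 0, denoting by xᵗ(i) the i-th row of Xᵗ and by x̄ᵗ := (1/m)∑_{i=1}^m xᵗ(i) the row average, one has (1/m)∑_{i=1}^m ‖xᵗ(i) − x̄ᵗ‖² ≤ B² · ( (λ^Q + 1)/((1−λ)² m^{2(Q−1)}) + (λ^Q + 1)/(1−λ^Q)² ). -/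

import Mathlib

open scoped Matrix

/-- The ℓ2 operator norm of a real square matrix. -/
noncomputable def l2OpNorm {m : ℕ} (A : Matrix (Fin m) (Fin m) ℝ) : ℝ :=
  ‖Matrix.toEuclideanCLM (𝕜 := ℝ) A‖

/-- The averaging matrix `P := (1/m)·1·1ᵀ`. -/
noncomputable def avgMatrix (m : ℕ) : Matrix (Fin m) (Fin m) ℝ :=
  (m : ℝ)⁻¹ • Matrix.vecMulVec (fun _ => (1 : ℝ)) (fun _ => (1 : ℝ))

/-!
Let `P` be the averaging matrix and `Yᵗ := (1 - P) Xᵗ` the deviation from the row mean. As `W` is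
symmetric with `W·1 = 1`, the idempotent `P` commutes with `W`, whence
`(1 - P) W^Q = (W - P)^Q = (W - P)^Q (1 - P)` and `Yᵗ⁺¹ = (W - P)^Q ((Zᵗ - Xᵗ) + Yᵗ)`.
Left multiplication by a matrix scales the Frobenius norm by at most its ℓ2 operator norm, so
`‖Yᵗ⁺¹‖ ≤ λ^Q (√(m B²) + ‖Yᵗ‖)`, and from `Y⁰ = 0` we get `‖Yᵗ‖ ≤ λ^Q √(m B²) / (1 - λ^Q)`.
The consensus error `‖Yᵗ‖² / m` is therefore at most `B² λ^{2Q} / (1 - λ^Q)²`, which is already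
below the second term of the bound.
-/

attribute [local instance] Matrix.frobeniusNormedAddCommGroup

section Idempotent

variable {R : Type*} [Ring R] {P W : R}

theorem commute_one_sub_of_mul_eq (hWP : W * P = P) (hPW : P * W = P) : Commute (1 - P) W := by
  rw [Commute, SemiconjBy, sub_mul, mul_sub, one_mul, mul_one, hWP, hPW]

theorem one_sub_mul_pow_eq_sub_pow (hP : IsIdempotentElem P) (hWP : W * P = P)
    (hPW : P * W = P) {n : ℕ} (hn : n ≠ 0) : (1 - P) * W ^ n = (W - P) ^ n := by
  rw [← hP.one_sub.pow_eq hn, ← (commute_one_sub_of_mul_eq hWP hPW).mul_pow, sub_mul, one_mul,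
    hPW]

theorem sub_pow_mul_one_sub (hP : IsIdempotentElem P) (hWP : W * P = P)
    (hPW : P * W = P) {n : ℕ} (hn : n ≠ 0) : (W - P) ^ n * (1 - P) = (W - P) ^ n := by
  rw [← one_sub_mul_pow_eq_sub_pow hP hWP hPW hn, mul_assoc,
    ((commute_one_sub_of_mul_eq hWP hPW).pow_right n).symm.eq, ← mul_assoc, hP.one_sub.eq]

end Idempotent

theorem le_mul_div_one_sub_of_le_mul_add {a : ℕ → ℝ} {r D : ℝ} (hr0 : 0 ≤ r) (hr1 : r < 1)
    (h0 : a 0 ≤ r * D / (1 - r)) (hstep : ∀ t, a (t + 1) ≤ r * (D + a t)) (t : ℕ) :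
    a t ≤ r * D / (1 - r) := by
  induction t with
  | zero => exact h0
  | succ t ih =>
    have hfix : r * (D + r * D / (1 - r)) = r * D / (1 - r) := by
      field_simp [(sub_pos.mpr hr1).ne']
      ring
    calc a (t + 1) ≤ r * (D + a t) := hstep t
      _ ≤ r * (D + r * D / (1 - r)) := by gcongr
      _ = r * D / (1 - r) := hfix

section Frobenius

variable {m n : Type*} [Fintype m] [Fintype n]

theorem frobenius_norm_sq_eq_sum_norm_sq_row (M : Matrix m n ℝ) :
    ‖M‖ ^ 2 = ∑ i, ‖WithLp.toLp 2 (M i)‖ ^ 2 :=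
  PiLp.norm_sq_eq_of_L2 _ (WithLp.toLp 2 fun i => WithLp.toLp 2 (M i))

theorem frobenius_norm_sq_eq_sum_sq (M : Matrix m n ℝ) :
    ‖M‖ ^ 2 = ∑ i, ∑ j, M i j ^ 2 := by
  simp only [frobenius_norm_sq_eq_sum_norm_sq_row, EuclideanSpace.norm_sq_eq, Real.norm_eq_abs,
    sq_abs]

theorem norm_toLp_mulVec_le_l2OpNorm_mul {k : ℕ} (A : Matrix (Fin k) (Fin k) ℝ)
    (v : Fin k → ℝ) : ‖WithLp.toLp 2 (A *ᵥ v)‖ ≤ l2OpNorm A * ‖WithLp.toLp 2 v‖ := by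
  rw [l2OpNorm, ← Matrix.toEuclideanCLM_toLp]
  exact (Matrix.toEuclideanCLM (𝕜 := ℝ) A).le_opNorm (WithLp.toLp 2 v)

theorem frobenius_norm_mul_le_l2OpNorm_mul {k : ℕ} (A : Matrix (Fin k) (Fin k) ℝ)
    (M : Matrix (Fin k) n ℝ) : ‖A * M‖ ≤ l2OpNorm A * ‖M‖ := by
  have hA : 0 ≤ l2OpNorm A := norm_nonneg _
  rw [← Matrix.frobenius_norm_transpose (A * M), ← Matrix.frobenius_norm_transpose M]
  refine (pow_le_pow_iff_left₀ (norm_nonneg _) (by positivity) two_ne_zero).mp ?_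
  rw [mul_pow, frobenius_norm_sq_eq_sum_norm_sq_row, frobenius_norm_sq_eq_sum_norm_sq_row,
    Finset.mul_sum]
  gcongr with j
  have hcol : (A * M)ᵀ j = A *ᵥ Mᵀ j := by
    ext i
    simp [Matrix.mul_apply, Matrix.mulVec, dotProduct]
  rw [← mul_pow, hcol]
  gcongr
  exact norm_toLp_mulVec_le_l2OpNorm_mul A _

end Frobenius

theorem l2OpNorm_pow_le {k : ℕ} (A : Matrix (Fin k) (Fin k) ℝ) {n : ℕ} (hn : n ≠ 0) :
    l2OpNorm (A ^ n) ≤ l2OpNorm A ^ n := by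
  rw [l2OpNorm, map_pow]
  exact norm_pow_le' _ (Nat.pos_of_ne_zero hn)

theorem avgMatrix_apply (m : ℕ) (i j : Fin m) : avgMatrix m i j = (m : ℝ)⁻¹ := by
  simp [avgMatrix, Matrix.vecMulVec_apply]

theorem isIdempotentElem_avgMatrix (m : ℕ) : IsIdempotentElem (avgMatrix m) := by
  ext i j
  simpa [Matrix.mul_apply, avgMatrix_apply, mul_assoc] using inv_mul_mul_self ((m : ℝ)⁻¹)

theorem mul_avgMatrix {m : ℕ} {W : Matrix (Fin m) (Fin m) ℝ}
    (hW1 : W *ᵥ (fun _ => (1 : ℝ)) = fun _ => 1) : W * avgMatrix m = avgMatrix m := by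
  rw [avgMatrix, Matrix.mul_smul, Matrix.mul_vecMulVec, hW1]

theorem avgMatrix_mul {m : ℕ} {W : Matrix (Fin m) (Fin m) ℝ} (hsymm : W.IsSymm)
    (hW1 : W *ᵥ (fun _ => (1 : ℝ)) = fun _ => 1) : avgMatrix m * W = avgMatrix m := by
  rw [avgMatrix, Matrix.smul_mul, Matrix.vecMulVec_mul, ← Matrix.mulVec_transpose, hsymm.eq, hW1]

theorem one_sub_avgMatrix_mul_apply {m : ℕ} {n : Type*} [Fintype n] (X : Matrix (Fin m) n ℝ)
    (i : Fin m) (k : n) :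
    ((1 - avgMatrix m) * X : Matrix (Fin m) n ℝ) i k = X i k - (m : ℝ)⁻¹ * ∑ i', X i' k := by
  rw [Matrix.sub_mul, Matrix.one_mul, Matrix.sub_apply, Matrix.mul_apply]
  simp only [avgMatrix_apply, Finset.mul_sum]

theorem frobenius_norm_one_sub_avgMatrix_mul_le {m d : ℕ} {W : Matrix (Fin m) (Fin m) ℝ}
    (hsymm : W.IsSymm) (hW1 : W *ᵥ (fun _ => (1 : ℝ)) = fun _ => 1)
    (hlam : l2OpNorm (W - avgMatrix m) < 1) {Q : ℕ} (hQ : Q ≠ 0) {D : ℝ}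
    {Z X : ℕ → Matrix (Fin m) (Fin d) ℝ} (hX0 : X 0 = 0)
    (hXrec : ∀ t, X (t + 1) = W ^ Q * Z t) (hZX : ∀ t, ‖Z t - X t‖ ≤ D) (t : ℕ) :
    ‖(1 - avgMatrix m) * X t‖ ≤
      l2OpNorm (W - avgMatrix m) ^ Q * D / (1 - l2OpNorm (W - avgMatrix m) ^ Q) := by
  set P := avgMatrix m
  have hP : IsIdempotentElem P := isIdempotentElem_avgMatrix m
  have hWP : W * P = P := mul_avgMatrix hW1
  have hPW : P * W = P := avgMatrix_mul hsymm hW1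
  have hr0 : 0 ≤ l2OpNorm (W - P) ^ Q := pow_nonneg (norm_nonneg _) Q
  have hr1 : l2OpNorm (W - P) ^ Q < 1 := pow_lt_one₀ (norm_nonneg _) hlam hQ
  have hD : 0 ≤ D := (norm_nonneg _).trans (hZX 0)
  refine le_mul_div_one_sub_of_le_mul_add (a := fun t => ‖(1 - P) * X t‖) hr0 hr1
    (by rw [hX0, Matrix.mul_zero, norm_zero]; positivity) (fun t => ?_) t
  have hdecomp : (1 - P) * X (t + 1) = (W - P) ^ Q * (Z t - X t + (1 - P) * X t) := by
    rw [hXrec, ← Matrix.mul_assoc, one_sub_mul_pow_eq_sub_pow hP hWP hPW hQ, Matrix.mul_add,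
      ← Matrix.mul_assoc, sub_pow_mul_one_sub hP hWP hPW hQ, ← Matrix.mul_add, sub_add_cancel]
  rw [hdecomp]
  refine (frobenius_norm_mul_le_l2OpNorm_mul _ _).trans ?_
  gcongr
  · exact l2OpNorm_pow_le _ hQ
  · exact (norm_add_le _ _).trans (by gcongr; exact hZX t)

theorem consensus_error_bound_DFedSAM_MGS_general (m d : ℕ) (hm : 1 ≤ m)
    (W : Matrix (Fin m) (Fin m) ℝ) (hsymm : W.IsSymm)
    (hW1 : W.mulVec (fun _ => (1 : ℝ)) = fun _ => (1 : ℝ))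
    (hlam : l2OpNorm (W - avgMatrix m) < 1)
    (Q : ℕ) (hQ : 1 ≤ Q)
    (B : ℝ)
    (Z X : ℕ → Matrix (Fin m) (Fin d) ℝ)
    (hX0 : X 0 = 0) (hXrec : ∀ t : ℕ, X (t + 1) = W ^ Q * Z t)
    (hdrift : ∀ j : ℕ, ∑ i, ∑ k, (X j i k - Z j i k) ^ 2 ≤ (m : ℝ) * B ^ 2) :
    ∀ t : ℕ,
      (m : ℝ)⁻¹ * ∑ i, ∑ k, (X t i k - (m : ℝ)⁻¹ * ∑ i', X t i' k) ^ 2 ≤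
        B ^ 2 * (((l2OpNorm (W - avgMatrix m)) ^ Q + 1) /
            ((1 - l2OpNorm (W - avgMatrix m)) ^ 2 * (m : ℝ) ^ (2 * (Q - 1))) +
          ((l2OpNorm (W - avgMatrix m)) ^ Q + 1) /
            (1 - (l2OpNorm (W - avgMatrix m)) ^ Q) ^ 2) := by
  intro t
  set r := l2OpNorm (W - avgMatrix m) ^ Q
  have hm0 : (m : ℝ) ≠ 0 := Nat.cast_ne_zero.mpr (by omega)
  have hr0 : 0 ≤ r := pow_nonneg (norm_nonneg _) Q
  have hr1 : r < 1 := pow_lt_one₀ (norm_nonneg _) hlam (by omega)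
  have hZX (j : ℕ) : ‖Z j - X j‖ ≤ √(m * B ^ 2) := by
    refine Real.le_sqrt_of_sq_le ?_
    rw [norm_sub_rev, frobenius_norm_sq_eq_sum_sq]
    exact hdrift j
  have hY := frobenius_norm_one_sub_avgMatrix_mul_le hsymm hW1 hlam (by omega) hX0 hXrec hZX t
  simp only [← one_sub_avgMatrix_mul_apply, ← frobenius_norm_sq_eq_sum_sq]
  calc (m : ℝ)⁻¹ * ‖(1 - avgMatrix m) * X t‖ ^ 2
      ≤ (m : ℝ)⁻¹ * (r * √(m * B ^ 2) / (1 - r)) ^ 2 := by gcongr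
    _ = B ^ 2 * (r ^ 2 / (1 - r) ^ 2) := by
      rw [div_pow, mul_pow, Real.sq_sqrt (by positivity)]
      field_simp
    _ ≤ _ := by
      gcongr
      calc r ^ 2 / (1 - r) ^ 2 ≤ (r + 1) / (1 - r) ^ 2 := by gcongr; nlinarith
        _ ≤ _ := le_add_of_nonneg_left (div_nonneg (by linarith) (by positivity))

/-- deterministic core of Lemma D.5 of the paper, the
consensus-error bound with `Q` gossip steps per round. If `W` is symmetric
with `W·1 = 1`, `λ := ‖W - P‖ < 1`, `Q ≥ 1`, `X⁰ = 0`, `Xᵗ⁺¹ = W^Q Zᵗ`, and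
`‖Xʲ - Zʲ‖_F² ≤ m B²` for all `j`, then for every `t`,
`(1/m) ∑ᵢ ‖xᵗ(i) - x̄ᵗ‖² ≤ B²·((λ^Q+1)/((1-λ)² m^{2(Q-1)}) + (λ^Q+1)/(1-λ^Q)²)`. -/
theorem consensus_error_bound_DFedSAM_MGS (m d : ℕ) (hm : 1 ≤ m) (hd : 1 ≤ d)
    (W : Matrix (Fin m) (Fin m) ℝ) (hsymm : W.IsSymm)
    (hW1 : W.mulVec (fun _ => (1 : ℝ)) = fun _ => (1 : ℝ))
    (hlam : l2OpNorm (W - avgMatrix m) < 1)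
    (Q : ℕ) (hQ : 1 ≤ Q)
    (B : ℝ) (hB : 0 ≤ B)
    (Z X : ℕ → Matrix (Fin m) (Fin d) ℝ)
    (hX0 : X 0 = 0) (hXrec : ∀ t : ℕ, X (t + 1) = W ^ Q * Z t)
    (hdrift : ∀ j : ℕ, ∑ i, ∑ k, (X j i k - Z j i k) ^ 2 ≤ (m : ℝ) * B ^ 2) :
    ∀ t : ℕ,
      (m : ℝ)⁻¹ * ∑ i, ∑ k, (X t i k - (m : ℝ)⁻¹ * ∑ i', X t i' k) ^ 2 ≤
        B ^ 2 * (((l2OpNorm (W - avgMatrix m)) ^ Q + 1) /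
            ((1 - l2OpNorm (W - avgMatrix m)) ^ 2 * (m : ℝ) ^ (2 * (Q - 1))) +
          ((l2OpNorm (W - avgMatrix m)) ^ Q + 1) /
            (1 - (l2OpNorm (W - avgMatrix m)) ^ Q) ^ 2) :=
  consensus_error_bound_DFedSAM_MGS_general m d hm W hsymm hW1 hlam Q hQ B Z X hX0 hXrec hdrift
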